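/- arXiv:2201.00321 — 2 statements merged into one kernel-verified Lean document; each statement's English description precedes it below -/
import Mathlib

section
/- Let X : [0,T] → ℝ be continuous and let t₀ ∈ [0,T] satisfy X(t₀) > min_{t∈[0,T]} X(t). Then there exists ε > 0 such that for every continuous function h : [0,T] → ℝ vanishing outside (t₀ − ε, t₀ + ε) ∩ [0,T], there exists α₀ > 0 such that for all α with 0 < α ≤ α₀, max_{t∈[0,T]}((X(t) + α h(t))₋) = max_{t∈[0,T]}(X(t))₋ and max_{t∈[0,T]}((X(t) − α h(t))₋) = max_{t∈[0,T]}(X(t))₋; that is, d_𝕂(X ± α h) = d_𝕂(X) for all sufficiently small α > 0. -/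
private lemma sup_negPart_eq {ι : Type*} [Nonempty ι] (f : ι → ℝ) (c : ℝ) (i0 : ι)
    (h0 : f i0 = c) (hb : ∀ i, c ≤ f i) :
    (⨆ i, max (-(f i)) 0) = max (-c) 0 := by
  refine le_antisymm (ciSup_le fun i => max_le_max (neg_le_neg (hb i)) le_rfl) ?_
  have hle : max (-(f i0)) 0 ≤ ⨆ i, max (-(f i)) 0 :=
    le_ciSup ⟨max (-c) 0, by rintro x ⟨i, rfl⟩; exact max_le_max (neg_le_neg (hb i)) le_rfl⟩ i0
  rwa [h0] at hle

/-- If `t₀ ∈ [0,T]` is not a minimizer of the continuous function `X`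
(i.e. `X t₀ > min_{t∈[0,T]} X t`), then there is `ε > 0` such that for every
continuous `h` vanishing outside `(t₀ − ε, t₀ + ε) ∩ [0,T]` and all
sufficiently small `α > 0`,
`max_t ((X t ± α h t)₋) = max_t (X t)₋`, i.e. `d_𝕂(X ± α h) = d_𝕂(X)`. -/
theorem negPart_sup_stable_away_from_argmin (T : ℝ) (hT : 0 < T)
    (X : C(Set.Icc (0:ℝ) T, ℝ)) (t₀ : Set.Icc (0:ℝ) T)
    (ht₀ : (⨅ t : Set.Icc (0:ℝ) T, X t) < X t₀) :
    ∃ ε > (0:ℝ), ∀ h : C(Set.Icc (0:ℝ) T, ℝ),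
      (∀ t : Set.Icc (0:ℝ) T,
          (t : ℝ) ∉ Set.Ioo ((t₀ : ℝ) - ε) ((t₀ : ℝ) + ε) → h t = 0) →
      ∃ α₀ > (0:ℝ), ∀ α : ℝ, 0 < α → α ≤ α₀ →
        (⨆ t : Set.Icc (0:ℝ) T, max (-(X t + α * h t)) 0)
            = (⨆ t : Set.Icc (0:ℝ) T, max (-(X t)) 0) ∧
        (⨆ t : Set.Icc (0:ℝ) T, max (-(X t - α * h t)) 0)
            = (⨆ t : Set.Icc (0:ℝ) T, max (-(X t)) 0) := by
  have hne : Nonempty (Set.Icc (0:ℝ) T) := ⟨⟨0, le_refl 0, hT.le⟩⟩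
  obtain ⟨t', -, ht'⟩ :=
    isCompact_univ.exists_isMinOn Set.univ_nonempty X.continuous.continuousOn
  have hmin : ∀ t, X t' ≤ X t := fun t => ht' (Set.mem_univ t)
  have hinf : (⨅ t, X t) = X t' :=
    le_antisymm (ciInf_le ⟨X t', by rintro x ⟨t, rfl⟩; exact hmin t⟩ t') (le_ciInf hmin)
  rw [hinf] at ht₀
  set δ := (X t₀ - X t') / 2 with hδdef
  have hδ : 0 < δ := by simp only [hδdef]; linarith
  have h2δ : X t₀ = X t' + 2 * δ := by simp only [hδdef]; ring
  obtain ⟨ε, hε, hball⟩ := Metric.continuousAt_iff.mp (X.continuous.continuousAt (x := t₀)) δ hδ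
  have hinside : ∀ t : Set.Icc (0:ℝ) T,
      (t : ℝ) ∈ Set.Ioo ((t₀ : ℝ) - ε) ((t₀ : ℝ) + ε) → X t' + δ < X t := by
    intro t hmem
    have hd : dist t t₀ < ε := by
      rw [Subtype.dist_eq, Real.dist_eq, abs_lt]
      exact ⟨by linarith [hmem.1], by linarith [hmem.2]⟩
    have hlt := hball hd
    rw [Real.dist_eq] at hlt
    have := abs_lt.mp hlt
    linarith [this.1]
  have ht'out : (t' : ℝ) ∉ Set.Ioo ((t₀ : ℝ) - ε) ((t₀ : ℝ) + ε) := fun hm => by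
    have := hinside t' hm; linarith
  refine ⟨ε, hε, fun h hh => ?_⟩
  have hht' : h t' = 0 := hh t' ht'out
  have hM : (0:ℝ) ≤ ‖h‖ := norm_nonneg _
  refine ⟨δ / (‖h‖ + 1), div_pos hδ (by linarith), fun α hα hα₀ => ?_⟩
  have hαh : ∀ t, |α * h t| ≤ δ := by
    intro t
    have h1 : |h t| ≤ ‖h‖ := h.norm_coe_le_norm t
    calc |α * h t| = α * |h t| := by rw [abs_mul, abs_of_pos hα]
      _ ≤ (δ / (‖h‖ + 1)) * (‖h‖ + 1) :=
        mul_le_mul hα₀ (by linarith) (abs_nonneg _) (le_of_lt (div_pos hδ (by linarith)))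
      _ = δ := div_mul_cancel₀ _ (by linarith)
  have hpos : ∀ t, X t' ≤ X t + α * h t := by
    intro t
    by_cases hmem : (t : ℝ) ∈ Set.Ioo ((t₀ : ℝ) - ε) ((t₀ : ℝ) + ε)
    · have h2 := hinside t hmem
      have h3 := hαh t
      have h4 := neg_abs_le (α * h t)
      linarith
    · rw [hh t hmem, mul_zero, add_zero]; exact hmin t
  have hneg : ∀ t, X t' ≤ X t - α * h t := by
    intro t
    by_cases hmem : (t : ℝ) ∈ Set.Ioo ((t₀ : ℝ) - ε) ((t₀ : ℝ) + ε)
    · have h2 := hinside t hmem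
      have h3 := hαh t
      have h4 := le_abs_self (α * h t)
      linarith
    · rw [hh t hmem, mul_zero, sub_zero]; exact hmin t
  have hbase : (⨆ t : Set.Icc (0:ℝ) T, max (-(X t)) 0) = max (-(X t')) 0 :=
    sup_negPart_eq (fun t => X t) (X t') t' rfl hmin
  constructor
  · rw [hbase, sup_negPart_eq (fun t => X t + α * h t) (X t') t' (by simp [hht']) hpos]
  · rw [hbase, sup_negPart_eq (fun t => X t - α * h t) (X t') t' (by simp [hht']) hneg]
end

section
/- The support of any subgradient of d_𝕂 at X is contained in the set of minimizers of X: let X : [0,T] → ℝ be continuous and let Λ : C([0,T];ℝ) → ℝ be a bounded linear functional satisfying Λ(f) ≤ d_𝕂(X + f) − d_𝕂(X) for every f ∈ C([0,T];ℝ). If t₀ ∈ [0,T] satisfies X(t₀) > min_{t∈[0,T]} X(t), then there exists ε > 0 such that Λ(h) = 0 for every continuous function h : [0,T] → ℝ vanishing outside (t₀ − ε, t₀ + ε) ∩ [0,T]. -/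
/-- The support of any subgradient of `d_𝕂` at `X` is contained in the set of
minimizers of `X`: if `Λ` is a bounded linear functional with
`Λ f ≤ d_𝕂(X + f) − d_𝕂(X)` for all continuous `f`, and `t₀` is not a
minimizer of `X`, then there is `ε > 0` such that `Λ h = 0` for every
continuous `h` vanishing outside `(t₀ − ε, t₀ + ε) ∩ [0,T]`. -/
theorem subgradient_support_in_argmin (T : ℝ) (hT : 0 < T)
    (X : C(Set.Icc (0:ℝ) T, ℝ))
    (Λ : C(Set.Icc (0:ℝ) T, ℝ) →L[ℝ] ℝ)
    (hΛ : ∀ f : C(Set.Icc (0:ℝ) T, ℝ),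
      Λ f ≤ Metric.infDist (X + f) {Y : C(Set.Icc (0:ℝ) T, ℝ) | ∀ t, 0 ≤ Y t}
            - Metric.infDist X {Y : C(Set.Icc (0:ℝ) T, ℝ) | ∀ t, 0 ≤ Y t})
    (t₀ : Set.Icc (0:ℝ) T)
    (ht₀ : (⨅ t : Set.Icc (0:ℝ) T, X t) < X t₀) :
    ∃ ε > (0:ℝ), ∀ h : C(Set.Icc (0:ℝ) T, ℝ),
      (∀ t : Set.Icc (0:ℝ) T,
          (t : ℝ) ∉ Set.Ioo ((t₀ : ℝ) - ε) ((t₀ : ℝ) + ε) → h t = 0) →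
      Λ h = 0 := by
  classical
  haveI : Nonempty (Set.Icc (0:ℝ) T) := ⟨⟨0, le_refl 0, hT.le⟩⟩
  set K := {Y : C(Set.Icc (0:ℝ) T, ℝ) | ∀ t, 0 ≤ Y t} with hKdef
  have hKne : K.Nonempty := ⟨0, fun t => le_refl 0⟩
  -- minimum attained
  obtain ⟨ts, -, hts⟩ := isCompact_univ.exists_isMinOn Set.univ_nonempty
    X.continuous.continuousOn
  set m := X ts with hmdef
  have hmle : ∀ t, m ≤ X t := fun t => hts (Set.mem_univ t)
  have hinf : (⨅ t : Set.Icc (0:ℝ) T, X t) = m := by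
    refine le_antisymm (ciInf_le ⟨m, ?_⟩ ts) (le_ciInf hmle)
    rintro _ ⟨t, rfl⟩; exact hmle t
  have hmlt : m < X t₀ := by rw [hinf] at ht₀; exact ht₀
  set δ := (X t₀ - m)/2 with hδdef
  have hδpos : 0 < δ := div_pos (sub_pos.mpr hmlt) two_pos
  -- continuity of X at t₀
  obtain ⟨ε, hεpos, hε⟩ := Metric.continuousAt_iff.mp X.continuous.continuousAt δ hδpos
  refine ⟨ε, hεpos, fun h hsupp => ?_⟩
  -- lower bound for infDist X K
  have hlb : max 0 (-m) ≤ Metric.infDist X K := by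
    refine max_le Metric.infDist_nonneg ?_
    by_contra hcon
    push_neg at hcon
    obtain ⟨Y, hYK, hYd⟩ := (Metric.infDist_lt_iff hKne).mp hcon
    have h1 : dist (X ts) (Y ts) ≤ dist X Y := ContinuousMap.dist_apply_le_dist ts
    have h2 : Y ts - X ts ≤ |X ts - Y ts| := by
      rw [abs_sub_comm]; exact le_abs_self _
    have := hYK ts
    rw [Real.dist_eq] at h1
    simp only [← hmdef] at *
    linarith
  -- key estimate
  have key : ∀ g : C(Set.Icc (0:ℝ) T, ℝ), ‖g‖ ≤ δ →
      (∀ t : Set.Icc (0:ℝ) T,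
        (t : ℝ) ∉ Set.Ioo ((t₀ : ℝ) - ε) ((t₀ : ℝ) + ε) → g t = 0) →
      Λ g ≤ 0 := by
    intro g hgn hgs
    have hlow : ∀ t, m ≤ (X + g) t := by
      intro t
      by_cases hc : (t : ℝ) ∈ Set.Ioo ((t₀ : ℝ) - ε) ((t₀ : ℝ) + ε)
      · have hd : dist t t₀ < ε := by
          rw [Subtype.dist_eq, Real.dist_eq, abs_lt]
          exact ⟨by linarith [hc.1], by linarith [hc.2]⟩
        have h1 : dist (X t) (X t₀) < δ := hε hd
        rw [Real.dist_eq] at h1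
        have h2 := abs_lt.mp h1
        have h3 := abs_le.mp (le_trans (g.norm_coe_le_norm t) hgn)
        have : (X + g) t = X t + g t := rfl
        rw [this, hδdef] at *
        linarith [h2.1, h3.1]
      · have : (X + g) t = X t + g t := rfl
        rw [this, hgs t hc, add_zero]
        exact hmle t
    have hub : Metric.infDist (X + g) K ≤ max 0 (-m) := by
      have hY : (X + g) ⊔ 0 ∈ K := by
        intro t
        have : ((X + g) ⊔ 0) t = max ((X + g) t) 0 := rfl
        rw [this]; exact le_max_right _ _
      refine le_trans (Metric.infDist_le_dist_of_mem hY) ?_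
      rw [ContinuousMap.dist_le (le_max_left 0 (-m))]
      intro t
      have hsup : ((X + g) ⊔ 0) t = max ((X + g) t) 0 := rfl
      rw [Real.dist_eq, hsup]
      rcases le_or_gt 0 ((X + g) t) with hp | hn
      · rw [max_eq_left hp, sub_self, abs_zero]; exact le_max_left _ _
      · rw [max_eq_right hn.le, sub_zero, abs_of_neg hn]
        exact le_trans (by linarith [hlow t]) (le_max_right 0 (-m))
    calc Λ g ≤ Metric.infDist (X + g) K - Metric.infDist X K := hΛ g
      _ ≤ max 0 (-m) - max 0 (-m) := sub_le_sub hub hlb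
      _ = 0 := sub_self _
  -- scaling
  set c : ℝ := δ / (‖h‖ + 1) with hcdef
  have hcpos : 0 < c := div_pos hδpos (by positivity)
  have hnorm : ‖c • h‖ ≤ δ := by
    have hns := norm_smul c h
    rw [Real.norm_eq_abs, abs_of_pos hcpos] at hns
    rw [hns, hcdef, div_mul_eq_mul_div, div_le_iff₀ (by positivity)]
    nlinarith [norm_nonneg h, hδpos]
  have hs1 : ∀ t : Set.Icc (0:ℝ) T,
      (t : ℝ) ∉ Set.Ioo ((t₀ : ℝ) - ε) ((t₀ : ℝ) + ε) → (c • h) t = 0 := by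
    intro t ht
    have : (c • h) t = c * h t := rfl
    rw [this, hsupp t ht, mul_zero]
  have hs2 : ∀ t : Set.Icc (0:ℝ) T,
      (t : ℝ) ∉ Set.Ioo ((t₀ : ℝ) - ε) ((t₀ : ℝ) + ε) → (-(c • h)) t = 0 := by
    intro t ht
    have : (-(c • h)) t = -((c • h) t) := rfl
    rw [this, hs1 t ht, neg_zero]
  have k1 := key (c • h) hnorm hs1
  have k2 := key (-(c • h)) (by rwa [norm_neg]) hs2
  rw [map_neg] at k2
  have : Λ (c • h) = 0 := le_antisymm k1 (by linarith)
  rw [map_smul, smul_eq_mul] at this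
  exact (mul_eq_zero.mp this).resolve_left (ne_of_gt hcpos)
end
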